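/- arXiv:1603.09103 — 9 statements merged into one kernel-verified Lean document; each statement's English description precedes it below -/
import Mathlib

section
/- Let t be an SL₂-tiling with associated functions p and q. Then for all integers v and all integers a < b < c the Ptolemy relations p(a,c)·t(b,v) = p(b,c)·t(a,v) + p(a,b)·t(c,v) and q(a,c)·t(v,b) = q(b,c)·t(v,a) + q(a,b)·t(v,c) hold. -/
/-- An `SL₂`-tiling: all entries are `≥ 1` and every adjacent `2×2` minor is `1`. -/
def IsSL2Tiling (t : ℤ → ℤ → ℤ) : Prop :=
  (∀ i j, 1 ≤ t i j) ∧
  (∀ i j, t i j * t (i+1) (j+1) - t i (j+1) * t (i+1) j = 1)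

/-- The infinite frieze `p` associated to an `SL₂`-tiling. -/
def pFrieze (t : ℤ → ℤ → ℤ) (a d : ℤ) : ℤ := t a 0 * t d 1 - t a 1 * t d 0

/-- The infinite frieze `q` associated to an `SL₂`-tiling. -/
def qFrieze (t : ℤ → ℤ → ℤ) (u x : ℤ) : ℤ := t 0 u * t 1 x - t 0 x * t 1 u

/-!
All rows of an `SL₂`-tiling satisfy one three-term recurrence `x j + x (j + 2) = s j * x (j + 1)`,
with `s j` independent of the row. The function
`w ↦ p(a,c) t(b,w) - p(b,c) t(a,w) - p(a,b) t(c,w)` is a combination of rows, so it satisfies the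
recurrence too; expanding `p` shows that it vanishes at `w = 0, 1`, hence everywhere. The relation
for `q` is the relation for `p` in the transposed tiling.
-/

theorem Int.of_iff_succ {P : ℤ → Prop} (h : ∀ j, P j ↔ P (j + 1)) {k : ℤ} (hk : P k) (j : ℤ) :
    P j :=
  Int.inductionOn' j k hk (fun i _ hi => (h i).1 hi)
    (fun i _ hi => (h (i - 1)).2 (by simpa using hi))

section Recurrence

variable {R : Type*} [CommRing R] [IsDomain R]

theorem Int.mul_eq_mul_of_forall_succ {u w : ℤ → R} (hw : ∀ i, w i ≠ 0)
    (h : ∀ i, u i * w (i + 1) = u (i + 1) * w i) (i k : ℤ) : u i * w k = u k * w i := by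
  refine Int.of_iff_succ (P := fun i => u i * w k = u k * w i) (fun i => ?_) rfl i
  rw [← mul_left_inj' (hw (i + 1)), ← mul_left_inj' (hw i) (a := u (i + 1) * w k)]
  constructor <;> intro e
  · linear_combination e - w k * h i
  · linear_combination e + w k * h i

theorem Int.eq_zero_of_same_recurrence {f g : ℤ → R} (hg : ∀ j, g j ≠ 0)
    (hrec : ∀ j, (f j + f (j + 2)) * g (j + 1) = (g j + g (j + 2)) * f (j + 1))
    {k : ℤ} (hk : f k = 0) (hk' : f (k + 1) = 0) (j : ℤ) : f j = 0 := by
  refine (Int.of_iff_succ (P := fun j => f j = 0 ∧ f (j + 1) = 0) (fun j => ?_) ⟨hk, hk'⟩ j).1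
  have hrec := hrec j
  rw [show j + 2 = j + 1 + 1 by ring] at hrec
  constructor
  · rintro ⟨h0, h1⟩
    exact ⟨h1, by simpa [h0, h1, hg] using hrec⟩
  · rintro ⟨h1, h2⟩
    exact ⟨by simpa [h1, h2, hg] using hrec, h1⟩

end Recurrence

namespace IsSL2Tiling

variable {t : ℤ → ℤ → ℤ}

theorem ne_zero (ht : IsSL2Tiling t) (i j : ℤ) : t i j ≠ 0 :=
  (zero_lt_one.trans_le (ht.1 i j)).ne'

theorem transpose (ht : IsSL2Tiling t) : IsSL2Tiling (fun i j => t j i) :=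
  ⟨fun i j => ht.1 j i, fun i j => by linear_combination ht.2 j i⟩

theorem neighbour_sum_mul_eq_succ (ht : IsSL2Tiling t) (i j : ℤ) :
    (t i j + t i (j + 2)) * t (i + 1) (j + 1) =
      (t (i + 1) j + t (i + 1) (j + 2)) * t i (j + 1) := by
  have h := ht.2 i (j + 1)
  rw [show j + 1 + 1 = j + 2 by ring] at h
  linear_combination ht.2 i j - h

/-- The ratio `(t i j + t i (j + 2)) / t i (j + 1)` does not depend on the row `i`. -/
theorem neighbour_sum_mul_eq (ht : IsSL2Tiling t) (i i' j : ℤ) :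
    (t i j + t i (j + 2)) * t i' (j + 1) = (t i' j + t i' (j + 2)) * t i (j + 1) :=
  Int.mul_eq_mul_of_forall_succ (fun i => ht.ne_zero i (j + 1))
    (fun i => ht.neighbour_sum_mul_eq_succ i j) i i'

theorem pFrieze_ptolemy (ht : IsSL2Tiling t) (v a b c : ℤ) :
    pFrieze t a c * t b v = pFrieze t b c * t a v + pFrieze t a b * t c v := by
  let f : ℤ → ℤ := fun w => pFrieze t a c * t b w - pFrieze t b c * t a w - pFrieze t a b * t c w
  have hrec : ∀ j, (f j + f (j + 2)) * t a (j + 1) = (t a j + t a (j + 2)) * f (j + 1) :=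
    fun j => by
    linear_combination pFrieze t a c * ht.neighbour_sum_mul_eq b a j -
      pFrieze t a b * ht.neighbour_sum_mul_eq c a j
  have h0 : f 0 = 0 := by simp only [f, pFrieze]; ring
  have h1 : f (0 + 1) = 0 := by simp only [f, pFrieze, zero_add]; ring
  linear_combination Int.eq_zero_of_same_recurrence (ht.ne_zero a) hrec h0 h1 v

end IsSL2Tiling

theorem qFrieze_eq_pFrieze_transpose (t : ℤ → ℤ → ℤ) (u x : ℤ) :
    qFrieze t u x = pFrieze (fun i j => t j i) u x := by
  simp only [qFrieze, pFrieze]; ring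

theorem ptolemy_pt_qt_general (t : ℤ → ℤ → ℤ) (ht : IsSL2Tiling t)
    (v a b c : ℤ) :
    pFrieze t a c * t b v = pFrieze t b c * t a v + pFrieze t a b * t c v ∧
    qFrieze t a c * t v b = qFrieze t b c * t v a + qFrieze t a b * t v c := by
  simp only [qFrieze_eq_pFrieze_transpose]
  exact ⟨ht.pFrieze_ptolemy v a b c, ht.transpose.pFrieze_ptolemy v a b c⟩

theorem ptolemy_pt_qt (t : ℤ → ℤ → ℤ) (ht : IsSL2Tiling t)
    (v a b c : ℤ) (hab : a < b) (hbc : b < c) :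
    pFrieze t a c * t b v = pFrieze t b c * t a v + pFrieze t a b * t c v ∧
    qFrieze t a c * t v b = qFrieze t b c * t v a + qFrieze t a b * t v c :=
  ptolemy_pt_qt_general t ht v a b c
end

section
/- Let t be an SL₂-tiling with associated functions p and q. Then for all integers b < c and v < w the Ptolemy relation t(b,v)·t(c,w) = t(b,w)·t(c,v) + p(b,c)·q(v,w) holds. -/
/-!
Since the entries are nonzero, the two unit minors on columns `j, j+1` and `j+1, j+2` show that
the ratio `(t i j + t i (j+2)) / t i (j+1)` does not depend on the row `i`. Hence the minor of any
two rows on adjacent columns does not depend on the column, and Cramer's rule writes every row as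
a fixed combination `t i = α i • t 0 + β i • t 1`. Every `2×2` minor of the tiling is then
`(α b * β c - β b * α c)` times the corresponding minor of rows `0, 1`; taking columns `0, 1`,
where that minor is `1`, identifies the factor as `p(b, c)`, and taking columns `v, w` gives the
Ptolemy relation.
-/

lemma mul_eq_mul_of_forall_succ {R : Type*} [CommRing R] [IsDomain R] {f g : ℤ → R}
    (hg : ∀ i, g i ≠ 0) (h : ∀ i, f i * g (i + 1) = f (i + 1) * g i) (r s : ℤ) :
    f r * g s = f s * g r := by
  have to_zero : ∀ i, f i * g 0 = f 0 * g i := by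
    intro i
    induction i using Int.induction_on with
    | zero => ring
    | succ i ih =>
      apply mul_right_cancel₀ (hg i)
      linear_combination -g 0 * h i + g (i + 1) * ih
    | pred i ih =>
      apply mul_right_cancel₀ (hg (-i))
      have hi := h (-i - 1)
      rw [sub_add_cancel] at hi
      linear_combination g 0 * hi + g (-i - 1) * ih
  apply mul_right_cancel₀ (hg 0)
  linear_combination g s * to_zero r - g r * to_zero s

namespace SL2Tiling

variable {R : Type*} [CommRing R] {t : ℤ → ℤ → R}

def adjMinor (t : ℤ → ℤ → R) (r s j : ℤ) : R := t r j * t s (j + 1) - t r (j + 1) * t s j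

section

variable (hdet : ∀ i j, t i j * t (i + 1) (j + 1) - t i (j + 1) * t (i + 1) j = 1)
include hdet

lemma three_term_succ_row (i j : ℤ) :
    (t i j + t i (j + 2)) * t (i + 1) (j + 1) = (t (i + 1) j + t (i + 1) (j + 2)) * t i (j + 1) := by
  have h := hdet i (j + 1)
  rw [add_assoc j 1 1, one_add_one_eq_two] at h
  linear_combination hdet i j - h

variable [IsDomain R] (hne : ∀ i j, t i j ≠ 0)
include hne

lemma three_term (r s j : ℤ) :
    (t r j + t r (j + 2)) * t s (j + 1) = (t s j + t s (j + 2)) * t r (j + 1) :=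
  mul_eq_mul_of_forall_succ (f := fun i => t i j + t i (j + 2)) (g := fun i => t i (j + 1))
    (fun i => hne i (j + 1)) (fun i => three_term_succ_row hdet i j) r s

lemma adjMinor_eq_adjMinor_zero (r s j : ℤ) : adjMinor t r s j = adjMinor t r s 0 := by
  have hper : Function.Periodic (adjMinor t r s) 1 := by
    intro j
    simp only [adjMinor, add_assoc j 1 1, one_add_one_eq_two]
    linear_combination -three_term hdet hne r s j
  simpa using hper.int_mul_eq j

/-- Cramer's rule, with the rows `0, 1` as basis: their minor on columns `j, j+1` is `1`. -/
lemma row_eq_combination (i j : ℤ) :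
    t i j = adjMinor t i 1 0 * t 0 j + adjMinor t 0 i 0 * t 1 j := by
  have h01 := hdet 0 j
  have hi1 := adjMinor_eq_adjMinor_zero hdet hne i 1 j
  have h0i := adjMinor_eq_adjMinor_zero hdet hne 0 i j
  rw [zero_add] at h01
  rw [← hi1, ← h0i, adjMinor, adjMinor]
  linear_combination -t i j * h01

lemma minor_eq_mul_minor_rows_zero_one (b c v w : ℤ) :
    t b v * t c w - t b w * t c v
      = (adjMinor t b 1 0 * adjMinor t 0 c 0 - adjMinor t 0 b 0 * adjMinor t c 1 0)
        * (t 0 v * t 1 w - t 0 w * t 1 v) := by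
  rw [row_eq_combination hdet hne b v, row_eq_combination hdet hne b w,
    row_eq_combination hdet hne c v, row_eq_combination hdet hne c w]
  ring

end

end SL2Tiling

theorem ptolemy_t_general (t : ℤ → ℤ → ℤ) (ht : IsSL2Tiling t)
    (b c v w : ℤ) :
    t b v * t c w = t b w * t c v + pFrieze t b c * qFrieze t v w := by
  obtain ⟨hpos, hdet⟩ := ht
  have hne : ∀ i j, t i j ≠ 0 := fun i j => (zero_lt_one.trans_le (hpos i j)).ne'
  have hminor01 := SL2Tiling.minor_eq_mul_minor_rows_zero_one hdet hne b c 0 1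
  have h01 := hdet 0 0
  rw [zero_add] at h01
  rw [h01, mul_one] at hminor01
  rw [pFrieze, hminor01, qFrieze]
  linear_combination SL2Tiling.minor_eq_mul_minor_rows_zero_one hdet hne b c v w

theorem ptolemy_t (t : ℤ → ℤ → ℤ) (ht : IsSL2Tiling t)
    (b c v w : ℤ) (hbc : b < c) (hvw : v < w) :
    t b v * t c w = t b w * t c v + pFrieze t b c * qFrieze t v w :=
  ptolemy_t_general t ht b c v w
end

section
/- Let t be an SL₂-tiling with associated functions p and q. Then p is an infinite frieze: p(a,a) = 0 and p(a,a+1) = 1 for all integers a, p(a,d) ≥ 1 for all integers a < d, and p(a,d)·p(a+1,d+1) − p(a,d+1)·p(a+1,d) = 1 for all integers a < d. The same statements hold for q. -/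
/-- An infinite frieze (indexed by pairs `i ≤ j`). -/
def IsInfiniteFrieze (f : ℤ → ℤ → ℤ) : Prop :=
  (∀ i, f i i = 0) ∧
  (∀ i, f i (i+1) = 1) ∧
  (∀ i j, i < j → 1 ≤ f i j) ∧
  (∀ i j, i < j → f i j * f (i+1) (j+1) - f i (j+1) * f (i+1) j = 1)

lemma pFrieze_pos (t : ℤ → ℤ → ℤ) (ht : IsSL2Tiling t) :
    ∀ a d : ℤ, a < d → 1 ≤ pFrieze t a d := by
  obtain ⟨hpos, hdet⟩ := ht
  intro a d had
  have key : ∀ n : ℕ, 1 ≤ pFrieze t a (a + 1 + n) := by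
    intro n
    induction n with
    | zero =>
      simpa [pFrieze] using (hdet a 0).ge
    | succ k ih =>
      set d := a + 1 + (k : ℤ) with hd
      have hid : pFrieze t a (d + 1) * t d 0 = pFrieze t a d * t (d+1) 0 + t a 0 := by
        have h := hdet d 0
        norm_num at h
        unfold pFrieze
        linear_combination t a 0 * h
      have h1 : 1 ≤ t d 0 := hpos d 0
      have h2 : 1 ≤ t (d+1) 0 := hpos (d+1) 0
      have h3 : 1 ≤ t a 0 := hpos a 0
      have hRHS : 1 ≤ pFrieze t a d * t (d+1) 0 + t a 0 := by nlinarith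
      have : 0 < pFrieze t a (d + 1) := by nlinarith
      have : 1 ≤ pFrieze t a (d + 1) := this
      simpa [hd, add_assoc, add_comm, add_left_comm] using this
  obtain ⟨n, hn⟩ := Int.le.dest (Int.add_one_le_iff.mpr had)
  have := key n
  rwa [hn] at this

lemma pFrieze_frieze (t : ℤ → ℤ → ℤ) (ht : IsSL2Tiling t) :
    IsInfiniteFrieze (pFrieze t) := by
  obtain ⟨hpos, hdet⟩ := ht
  refine ⟨?_, ?_, pFrieze_pos t ⟨hpos, hdet⟩, ?_⟩
  · intro i; simp [pFrieze]; ring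
  · intro i; simpa [pFrieze] using hdet i 0
  · intro i j _
    have hi := hdet i 0
    have hj := hdet j 0
    norm_num at hi hj
    unfold pFrieze
    linear_combination (t j 0 * t (j+1) 1 - t j 1 * t (j+1) 0) * hi + hj

theorem pq_are_infinite_friezes (t : ℤ → ℤ → ℤ) (ht : IsSL2Tiling t) :
    IsInfiniteFrieze (pFrieze t) ∧ IsInfiniteFrieze (qFrieze t) := by
  refine ⟨pFrieze_frieze t ht, ?_⟩
  have hT : IsSL2Tiling (fun i j => t j i) := by
    obtain ⟨hpos, hdet⟩ := ht
    exact ⟨fun i j => hpos j i, fun i j => by linear_combination hdet j i⟩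
  have : qFrieze t = pFrieze (fun i j => t j i) := by
    funext u x; simp [qFrieze, pFrieze]; ring
  rw [this]
  exact pFrieze_frieze _ hT
end

section
/- Let t be an SL₂-tiling with associated functions p and q, and let i, m be integers with m > 0. Then each of the following six sets is finite: {j : t(i,j) = m}, {j : t(j,i) = m}, {j : i < j and p(i,j) = m}, {j : j < i and p(j,i) = m}, {j : i < j and q(i,j) = m}, and {j : j < i and q(j,i) = m}. -/
/-- A set of integers bounded below on which some function to positive integers is
strictly decreasing is finite. -/
lemma finCore (S : Set ℤ) (f : ℤ → ℤ) (b : ℤ)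
    (hb : ∀ d ∈ S, b ≤ d) (h1 : ∀ d ∈ S, 1 ≤ f d)
    (h2 : ∀ d ∈ S, ∀ e ∈ S, d < e → f e < f d) : S.Finite := by
  classical
  rcases S.eq_empty_or_nonempty with h | ⟨d0, hd0⟩
  · simp [h]
  obtain ⟨lb, hlb, hleast⟩ := Int.exists_least_of_bdd (P := fun z => z ∈ S)
    ⟨b, fun z hz => hb z hz⟩ ⟨d0, hd0⟩
  have himg : f '' S ⊆ Set.Icc 1 (f lb) := by
    rintro _ ⟨d, hd, rfl⟩
    refine ⟨h1 d hd, ?_⟩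
    rcases lt_or_eq_of_le (hleast d hd) with h | h
    · exact le_of_lt (h2 lb hlb d hd h)
    · rw [← h]
  have hinj : Set.InjOn f S := by
    intro d hd e he hfe
    by_contra hne
    rcases lt_or_gt_of_ne hne with h | h
    · exact absurd hfe (h2 d hd e he h).ne'
    · exact absurd hfe (h2 e he d hd h).ne
  exact Set.Finite.of_finite_image ((Set.finite_Icc 1 (f lb)).subset himg) hinj

/-- Mirror version: bounded above, strictly increasing. -/
lemma finCore' (S : Set ℤ) (f : ℤ → ℤ) (b : ℤ)
    (hb : ∀ d ∈ S, d ≤ b) (h1 : ∀ d ∈ S, 1 ≤ f d)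
    (h2 : ∀ d ∈ S, ∀ e ∈ S, d < e → f d < f e) : S.Finite := by
  have hneg : (Neg.neg '' S).Finite := by
    apply finCore _ (fun z => f (-z)) (-b)
    · rintro _ ⟨d, hd, rfl⟩; exact neg_le_neg (hb d hd)
    · rintro _ ⟨d, hd, rfl⟩; simpa using h1 d hd
    · rintro _ ⟨d, hd, rfl⟩ _ ⟨e, he, rfl⟩ hlt
      simp only [neg_neg]
      exact h2 e he d hd (by omega)
  exact Set.Finite.of_finite_image hneg (fun a _ b _ h => by omega)

/-- In a sequence of positive integer vectors with consecutive determinants `≥ 1`,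
all forward determinants are `≥ 1`. -/
lemma detpos (x y : ℤ → ℤ) (hx : ∀ r, 1 ≤ x r) (hy : ∀ r, 1 ≤ y r)
    (hdet : ∀ r, 1 ≤ x r * y (r+1) - y r * x (r+1)) :
    ∀ a d : ℤ, a < d → 1 ≤ x a * y d - y a * x d := by
  intro a d had
  have key : ∀ e, a + 1 ≤ e → 1 ≤ x a * y e - y a * x e := by
    refine Int.le_induction ?_ ?_
    · exact hdet a
    · intro e _ ih
      have h1 := hdet e
      have keyid : (x a * y (e+1) - y a * x (e+1)) * x e
          = (x a * y e - y a * x e) * x (e+1) + (x e * y (e+1) - y e * x (e+1)) * x a := by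
        ring
      nlinarith [keyid, h1, ih, hx a, hx e, hx (e+1)]
  exact key d (by omega)

/-- Level sets `{j | b ≤ j ∧ y j = m}` are finite, given a companion `x` making
all forward 2×2 determinants positive. -/
lemma levelFin_ge (x y : ℤ → ℤ) (hx : ∀ r, 1 ≤ x r) (b m : ℤ) (hm : 0 < m)
    (hD : ∀ d e : ℤ, d < e → 1 ≤ x d * y e - y d * x e) :
    {j : ℤ | b ≤ j ∧ y j = m}.Finite := by
  apply finCore _ x b
  · rintro d ⟨hd, _⟩; exact hd
  · intro d _; exact hx d
  · rintro d ⟨_, hyd⟩ e ⟨_, hye⟩ hde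
    have h := hD d e hde
    rw [hyd, hye] at h
    nlinarith [h, hm]

lemma levelFin_le (x y : ℤ → ℤ) (hy : ∀ r, 1 ≤ y r) (b m : ℤ) (hm : 0 < m)
    (hD : ∀ d e : ℤ, d < e → 1 ≤ x d * y e - y d * x e) :
    {j : ℤ | j ≤ b ∧ x j = m}.Finite := by
  apply finCore' _ y b
  · rintro d ⟨hd, _⟩; exact hd
  · intro d _; exact hy d
  · rintro d ⟨_, hxd⟩ e ⟨_, hxe⟩ hde
    have h := hD d e hde
    rw [hxd, hxe] at h
    nlinarith [h, hm]

/-- Finiteness of level sets of the frieze to the right. -/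
lemma friezeFin_gt (x y : ℤ → ℤ) (hx : ∀ r, 1 ≤ x r) (a m : ℤ) (hm : 0 < m)
    (hD : ∀ d e : ℤ, d < e → 1 ≤ x d * y e - y d * x e) :
    {j : ℤ | a < j ∧ x a * y j - y a * x j = m}.Finite := by
  apply finCore _ x a
  · rintro d ⟨hd, _⟩; omega
  · intro d _; exact hx d
  · rintro d ⟨_, hd⟩ e ⟨_, he⟩ hde
    have hDde := hD d e hde
    have key : m * (x d - x e) = x a * (x d * y e - y d * x e) := by
      linear_combination x e * hd - x d * he
    nlinarith [hx a, hDde, hm]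

/-- Finiteness of level sets of the frieze to the left. -/
lemma friezeFin_lt (x y : ℤ → ℤ) (hx : ∀ r, 1 ≤ x r) (a m : ℤ) (hm : 0 < m)
    (hD : ∀ d e : ℤ, d < e → 1 ≤ x d * y e - y d * x e) :
    {j : ℤ | j < a ∧ x j * y a - y j * x a = m}.Finite := by
  apply finCore' _ x a
  · rintro d ⟨hd, _⟩; omega
  · intro d _; exact hx d
  · rintro d ⟨_, hd⟩ e ⟨_, he⟩ hde
    have hDde := hD d e hde
    have key : m * (x e - x d) = x a * (x d * y e - y d * x e) := by
      linear_combination x d * he - x e * hd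
    nlinarith [hx a, hDde, hm]

theorem finiteness_in_rows_and_columns (t : ℤ → ℤ → ℤ) (ht : IsSL2Tiling t)
    (i m : ℤ) (hm : 0 < m) :
    {j : ℤ | t i j = m}.Finite ∧
    {j : ℤ | t j i = m}.Finite ∧
    {j : ℤ | i < j ∧ pFrieze t i j = m}.Finite ∧
    {j : ℤ | j < i ∧ pFrieze t j i = m}.Finite ∧
    {j : ℤ | i < j ∧ qFrieze t i j = m}.Finite ∧
    {j : ℤ | j < i ∧ qFrieze t j i = m}.Finite := by
  obtain ⟨hpos, hdet⟩ := ht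
  -- determinant positivity along a fixed pair of adjacent rows (columns vary)
  have hrow : ∀ r : ℤ, ∀ d e : ℤ, d < e → 1 ≤ t r d * t (r+1) e - t (r+1) d * t r e := by
    intro r
    intro d e hde
    have := detpos (fun j => t r j) (fun j => t (r+1) j) (fun j => hpos r j)
      (fun j => hpos (r+1) j) (fun j => by have h := hdet r j; nlinarith [h]) d e hde
    simpa using this
  -- determinant positivity along a fixed pair of adjacent columns (rows vary)
  have hcol : ∀ c : ℤ, ∀ d e : ℤ, d < e → 1 ≤ t d c * t e (c+1) - t d (c+1) * t e c := by
    intro c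
    intro d e hde
    have := detpos (fun j => t j c) (fun j => t j (c+1)) (fun j => hpos j c)
      (fun j => hpos j (c+1)) (fun j => by have h := hdet j c; nlinarith [h]) d e hde
    simpa using this
  refine ⟨?_, ?_, ?_, ?_, ?_, ?_⟩
  · -- {j | t i j = m}
    have h1 : {j : ℤ | 0 ≤ j ∧ t i j = m}.Finite := by
      apply levelFin_ge (fun j => t (i-1) j) (fun j => t i j) (fun j => hpos (i-1) j) 0 m hm
      intro d e hde
      have := hrow (i-1) d e hde
      rw [sub_add_cancel] at this
      exact this
    have h2 : {j : ℤ | j ≤ 0 ∧ t i j = m}.Finite := by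
      apply levelFin_le (fun j => t i j) (fun j => t (i+1) j) (fun j => hpos (i+1) j) 0 m hm
      intro d e hde
      exact hrow i d e hde
    refine (h1.union h2).subset ?_
    intro j hj
    rcases le_or_gt 0 j with h | h
    · exact Or.inl ⟨h, hj⟩
    · exact Or.inr ⟨le_of_lt h, hj⟩
  · -- {j | t j i = m}
    have h1 : {j : ℤ | 0 ≤ j ∧ t j i = m}.Finite := by
      apply levelFin_ge (fun j => t j (i-1)) (fun j => t j i) (fun j => hpos j (i-1)) 0 m hm
      intro d e hde
      have := hcol (i-1) d e hde
      rw [sub_add_cancel] at this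
      exact this
    have h2 : {j : ℤ | j ≤ 0 ∧ t j i = m}.Finite := by
      apply levelFin_le (fun j => t j i) (fun j => t j (i+1)) (fun j => hpos j (i+1)) 0 m hm
      intro d e hde
      exact hcol i d e hde
    refine (h1.union h2).subset ?_
    intro j hj
    rcases le_or_gt 0 j with h | h
    · exact Or.inl ⟨h, hj⟩
    · exact Or.inr ⟨le_of_lt h, hj⟩
  · -- p, right
    have h := friezeFin_gt (fun r => t r 0) (fun r => t r 1) (fun r => hpos r 0) i m hm
      (by intro d e hde; have := hcol 0 d e hde; norm_num at this ⊢; linarith)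
    refine h.subset ?_
    rintro j ⟨hj1, hj2⟩
    exact ⟨hj1, by rw [pFrieze] at hj2; linear_combination hj2⟩
  · -- p, left
    have h := friezeFin_lt (fun r => t r 0) (fun r => t r 1) (fun r => hpos r 0) i m hm
      (by intro d e hde; have := hcol 0 d e hde; norm_num at this ⊢; linarith)
    refine h.subset ?_
    rintro j ⟨hj1, hj2⟩
    exact ⟨hj1, by rw [pFrieze] at hj2; linear_combination hj2⟩
  · -- q, right
    have h := friezeFin_gt (fun r => t 0 r) (fun r => t 1 r) (fun r => hpos 0 r) i m hm
      (by intro d e hde; have := hrow 0 d e hde; norm_num at this ⊢; linarith)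
    refine h.subset ?_
    rintro j ⟨hj1, hj2⟩
    exact ⟨hj1, by rw [qFrieze] at hj2; linear_combination hj2⟩
  · -- q, left
    have h := friezeFin_lt (fun r => t 0 r) (fun r => t 1 r) (fun r => hpos 0 r) i m hm
      (by intro d e hde; have := hrow 0 d e hde; norm_num at this ⊢; linarith)
    refine h.subset ?_
    rintro j ⟨hj1, hj2⟩
    exact ⟨hj1, by rw [qFrieze] at hj2; linear_combination hj2⟩
end

section
/- Let t be an SL₂-tiling having at least one entry equal to 1. Then the entries equal to 1 occur on a zig-zag: there exist a nonempty order-connected set K ⊆ ℤ (an interval of integers, bounded or unbounded on each side) and functions b, v : K → ℤ such that: (i) for all integers i, j, one has t(i,j) = 1 if and only if (i,j) = (b(k), v(k)) for some k ∈ K; (ii) for each k ∈ K with k+1 ∈ K, exactly one of the following two options holds: (a) b(k+1) < b(k) and v(k+1) = v(k), or (b) b(k+1) = b(k) and v(k+1) > v(k); (iii) if K is unbounded above, then for every k₀ ∈ K there exist k ≥ k₀ and k' ≥ k₀ in K with k+1, k'+1 ∈ K such that option (a) holds at k and option (b) holds at k'; (iv) symmetrically, if K is unbounded below, then for every k₀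 ∈ K there exist k ≤ k₀ and k' ≤ k₀ in K with k+1, k'+1 ∈ K such that option (a) holds at k and option (b) holds at k'. -/
open Set

def cross (a b : ℤ × ℤ) : ℤ := a.1 * b.2 - a.2 * b.1

lemma cross_mul_cross_sub_cross_mul_cross (a b c d : ℤ × ℤ) :
    cross a c * cross b d - cross a d * cross b c = cross a b * cross c d := by
  simp only [cross]; ring

lemma one_le_cross_of_chain {V : ℤ → ℤ × ℤ} (hV : ∀ n, 0 < (V n).1)
    (hstep : ∀ n, 1 ≤ cross (V n) (V (n + 1))) {m n : ℤ} (hmn : m < n) :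
    1 ≤ cross (V m) (V n) := by
  induction n, hmn using Int.leInduction with
  | base => exact hstep m
  | succ n hmn ih =>
    have key : cross (V m) (V (n + 1)) * (V n).1
        = cross (V m) (V n) * (V (n + 1)).1 + cross (V n) (V (n + 1)) * (V m).1 := by
      simp only [cross]; ring
    nlinarith [hV m, hV n, hV (n + 1), hstep n]

lemma exists_eq_one_of_fan {α β : ℤ → ℤ} {n : ℤ} (hn : 2 ≤ n) (hα₀ : α 0 = 1) (hβ₀ : β 0 = 0)
    (hαn : α n = 0) (hβn : β n = 1) (hpos : ∀ x, 0 < x → x < n → 0 < α x ∧ 0 < β x)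
    (hdet : ∀ x, 0 ≤ x → x < n → α x * β (x + 1) - β x * α (x + 1) = 1) :
    ∃ x, 0 < x ∧ x < n ∧ α x = 1 ∧ β x = 1 := by
  -- the first vector `(α x, β x)` of the fan on or above the diagonal
  obtain ⟨x, ⟨hx₀, hx⟩, hxmin⟩ := Int.exists_least_of_bdd (P := fun x => 0 ≤ x ∧ α x ≤ β x)
    ⟨0, fun x hx => hx.1⟩ ⟨n, by omega, by omega⟩
  have hxpos : 0 < x := lt_of_le_of_ne hx₀ fun h => by subst h; omega
  have hxn : x ≤ n := not_lt.1 fun h => by linarith [hxmin n ⟨by omega, by omega⟩]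
  have hprev : β (x - 1) < α (x - 1) :=
    not_le.1 fun h => by linarith [hxmin (x - 1) ⟨by omega, h⟩]
  have hβprev : 0 ≤ β (x - 1) := by
    rcases (show 0 ≤ x - 1 by omega).eq_or_lt with h | h
    · rw [← h, hβ₀]
    · exact (hpos _ h (by omega)).2.le
  have hd := hdet (x - 1) (by omega) (by omega)
  rw [sub_add_cancel] at hd
  rcases hxn.eq_or_lt with rfl | hxn
  · have := (hpos (x - 1) (by omega) (by omega)).2
    rw [hαn, hβn] at hd
    omega
  obtain ⟨hαx, hβx⟩ := hpos x hxpos hxn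
  have hαx1 : α x = 1 := by
    nlinarith [mul_nonneg (hβprev.trans hprev.le) (sub_nonneg.2 hx),
      mul_nonneg (by omega : 0 ≤ α (x - 1) - 1 - β (x - 1)) hαx.le]
  rw [hαx1] at hd hx
  exact ⟨x, hxpos, hxn, hαx1, by nlinarith⟩

lemma exists_cross_eq_one_of_chain {a b : ℤ × ℤ} {W : ℤ → ℤ × ℤ} {n : ℤ} (hn : 2 ≤ n)
    (hab : cross a b = 1) (hW₀ : W 0 = a) (hWn : W n = b)
    (hcone : ∀ x, 0 < x → x < n → 0 < cross (W x) b ∧ 0 < cross a (W x))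
    (hstep : ∀ x, 0 ≤ x → x < n → cross (W x) (W (x + 1)) = 1) :
    ∃ x, 0 < x ∧ x < n ∧ cross (W x) b = 1 ∧ cross a (W x) = 1 := by
  refine exists_eq_one_of_fan hn (by rw [hW₀, hab]) (by rw [hW₀, cross]; ring)
    (by rw [hWn, cross]; ring) (by rw [hWn, hab]) hcone fun x hx₀ hxn => ?_
  have := cross_mul_cross_sub_cross_mul_cross a (W x) b (W (x + 1))
  rw [hab, hstep x hx₀ hxn] at this
  simp only [cross] at this ⊢
  linarith

lemma exists_cross_eq_one_of_two_chains {u w : ℤ → ℤ × ℤ} {p i j q : ℤ} (hpi : p < i)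
    (hjq : j < q) (hu : ∀ s, cross (u s) (u (s + 1)) = 1) (hw : ∀ c, cross (w c) (w (c + 1)) = 1)
    (hij : cross (u i) (w j) = 1) (hpq : cross (u p) (w q) = 1)
    (hu_cone : ∀ s, p < s → s ≤ i → 0 < cross (u s) (w q) ∧ 0 < cross (u p) (u s))
    (hw_cone : ∀ c, j ≤ c → c < q → 0 < cross (w c) (w q) ∧ 0 < cross (u p) (w c)) :
    (∃ s, p < s ∧ s ≤ i ∧ cross (u s) (w q) = 1) ∨
      ∃ c, j ≤ c ∧ c < q ∧ cross (u p) (w c) = 1 := by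
  set m := i - p
  set W : ℤ → ℤ × ℤ := fun x => if x ≤ m then u (p + x) else w (j + (x - m - 1))
  have hWu {x : ℤ} (hx : x ≤ m) : W x = u (p + x) := if_pos hx
  have hWw {x : ℤ} (hx : m < x) : W x = w (j + (x - m - 1)) := if_neg hx.not_ge
  obtain ⟨x, hx₀, hxn, hxq, hpx⟩ := exists_cross_eq_one_of_chain (W := W)
    (n := m + (q - j) + 1) (by omega) hpq (by rw [hWu (by omega), add_zero])
    (by rw [hWw (by omega)]; congr 2; omega)
    (fun x hx₀ hxn => by
      by_cases hx : x ≤ m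
      · rw [hWu hx]; exact hu_cone _ (by omega) (by omega)
      · rw [hWw (by omega)]; exact hw_cone _ (by omega) (by omega))
    (fun x hx₀ hxn => by
      by_cases hx : x + 1 ≤ m
      · rw [hWu hx, hWu (by omega), ← add_assoc, hu]
      by_cases hx' : x = m
      · rw [hWu hx'.le, hWw (by omega), ← hij]
        congr 3 <;> omega
      · rw [hWw (by omega), hWw (by omega),
          show j + (x + 1 - m - 1) = j + (x - m - 1) + 1 by omega, hw])
  by_cases hx : x ≤ m
  · rw [hWu hx] at hxq
    exact .inl ⟨p + x, by omega, by omega, hxq⟩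
  · rw [hWw (by omega)] at hpx
    exact .inr ⟨_, by omega, by omega, hpx⟩

open Classical in
noncomputable def signedCount (D : Set ℤ) (n : ℤ) : ℤ :=
  ((Finset.Ico 0 n).filter (· ∈ D)).card - ((Finset.Ico n 0).filter (· ∈ D)).card

open Classical in
lemma signedCount_add_one (D : Set ℤ) (n : ℤ) :
    signedCount D (n + 1) = signedCount D n + if n ∈ D then 1 else 0 := by
  unfold signedCount
  rcases le_or_gt 0 n with h | h
  · rw [← Finset.insert_Ico_right_eq_Ico_add_one h,
      Finset.Ico_eq_empty_of_le (show (0 : ℤ) ≤ n + 1 by omega), Finset.Ico_eq_empty_of_le h,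
      Finset.filter_insert]
    split_ifs <;> simp
  · rw [← Finset.insert_Ico_add_one_left_eq_Ico h,
      Finset.Ico_eq_empty_of_le (show n + 1 ≤ 0 by omega), Finset.Ico_eq_empty_of_le h.le,
      Finset.filter_insert]
    split_ifs <;> simp

lemma monotone_signedCount (D : Set ℤ) : Monotone (signedCount D) :=
  monotone_int_of_le_succ fun n => by rw [signedCount_add_one]; split_ifs <;> omega

lemma strictMonoOn_signedCount (D : Set ℤ) : StrictMonoOn (signedCount D) D :=
  fun a ha b _ hab => calc
    signedCount D a < signedCount D (a + 1) := by rw [signedCount_add_one, if_pos ha]; omega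
    _ ≤ signedCount D b := monotone_signedCount D hab

lemma ordConnected_image_signedCount (D : Set ℤ) : (signedCount D '' D).OrdConnected := by
  refine ⟨?_⟩
  rintro _ ⟨a, -, rfl⟩ _ ⟨b, hb, rfl⟩ z ⟨haz, hzb⟩
  rcases hzb.eq_or_lt with rfl | hzb
  · exact ⟨b, hb, rfl⟩
  -- discrete intermediate value theorem: `signedCount D` increases in steps of at most one
  obtain ⟨c, ⟨hac, hcz⟩, hcmax⟩ := Int.exists_greatest_of_bdd
    (P := fun c => a ≤ c ∧ signedCount D c ≤ z)
    ⟨b, fun c hc => le_of_not_gt fun hbc => (hc.2.trans_lt hzb).not_ge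
      (monotone_signedCount D hbc.le)⟩ ⟨a, le_rfl, haz⟩
  have hnext : z < signedCount D (c + 1) := by
    by_contra! h
    linarith [hcmax (c + 1) ⟨by omega, h⟩]
  rw [signedCount_add_one] at hnext
  split_ifs at hnext with hc
  · exact ⟨c, hc, by omega⟩
  · omega

theorem exists_ordConnected_enumeration {α : Type*} [Nonempty α] (O : Set α) (φ : α → ℤ)
    (hφ : InjOn φ O) :
    ∃ (K : Set ℤ) (e : ℤ → α), K.OrdConnected ∧ BijOn e K O ∧ StrictMonoOn (φ ∘ e) K := by
  set r := signedCount (φ '' O)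
  have hR : BijOn (r ∘ φ) O ((r ∘ φ) '' O) :=
    ((strictMonoOn_signedCount _).injOn.comp hφ (mapsTo_image φ O)).bijOn_image
  refine ⟨(r ∘ φ) '' O, Function.invFunOn (r ∘ φ) O, ?_, hR.symm hR.invOn_invFunOn.symm, ?_⟩
  · rw [image_comp]
    exact ordConnected_image_signedCount _
  · intro k hk k' hk' hkk'
    apply (monotone_signedCount _).reflect_lt
    change (r ∘ φ) (Function.invFunOn (r ∘ φ) O k) < (r ∘ φ) (Function.invFunOn (r ∘ φ) O k')
    rwa [hR.invOn_invFunOn.2 hk, hR.invOn_invFunOn.2 hk']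

lemma finite_of_strictMonoOn_of_strictAntiOn {S : Set ℤ} {f g : ℤ → ℤ}
    (hf : StrictMonoOn f S) (hg : StrictAntiOn g S) (hf₀ : ∀ x ∈ S, 0 < f x)
    (hg₀ : ∀ x ∈ S, 0 < g x) : S.Finite := by
  rcases S.eq_empty_or_nonempty with rfl | ⟨x₀, hx₀⟩
  · exact finite_empty
  have below : (S ∩ Iic x₀).Finite :=
    Finite.of_injOn (t := Icc 1 (f x₀))
      (fun x hx => ⟨hf₀ x hx.1, hf.monotoneOn hx.1 hx₀ hx.2⟩)
      (hf.injOn.mono inter_subset_left) (finite_Icc _ _)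
  have above : (S ∩ Ici x₀).Finite :=
    Finite.of_injOn (t := Icc 1 (g x₀))
      (fun x hx => ⟨hg₀ x hx.1, hg.antitoneOn hx₀ hx.1 hx.2⟩)
      (hg.injOn.mono inter_subset_left) (finite_Icc _ _)
  exact (below.union above).subset fun x hx => (le_total x x₀).imp (⟨hx, ·⟩) (⟨hx, ·⟩)

lemma exists_ne_of_injOn_Ici {β γ : Type*} {g : ℤ → β} {π : β → γ} {S : Set β} {k₀ : ℤ}
    (hmaps : MapsTo g (Ici k₀) S) (hinj : InjOn g (Ici k₀))
    (hfin : ∀ c, {x ∈ S | π x = c}.Finite) : ∃ k, k₀ ≤ k ∧ π (g (k + 1)) ≠ π (g k) := by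
  by_contra! h
  have hconst (k : ℤ) (hk : k₀ ≤ k) : π (g k) = π (g k₀) := by
    induction k, hk using Int.leInduction with
    | base => rfl
    | succ k hk ih => rw [h k hk, ih]
  exact Ici_infinite k₀ (Finite.of_injOn (t := {x ∈ S | π x = π (g k₀)})
    (fun k hk => ⟨hmaps hk, hconst k hk⟩) hinj (hfin _))

lemma exists_ne_of_injOn_Iic {β γ : Type*} {g : ℤ → β} {π : β → γ} {S : Set β} {k₀ : ℤ}
    (hmaps : MapsTo g (Iic k₀) S) (hinj : InjOn g (Iic k₀))
    (hfin : ∀ c, {x ∈ S | π x = c}.Finite) : ∃ k, k < k₀ ∧ π (g (k + 1)) ≠ π (g k) := by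
  by_contra! h
  have hconst (k : ℤ) (hk : k ≤ k₀) : π (g k) = π (g k₀) := by
    induction k, hk using Int.leInductionDown with
    | base => rfl
    | pred k hk ih => rw [← ih, ← h (k - 1) (by omega), sub_add_cancel]
  exact Iic_infinite k₀ (Finite.of_injOn (t := {x ∈ S | π x = π (g k₀)})
    (fun k hk => ⟨hmaps hk, hconst k hk⟩) hinj (hfin _))

def ones (t : ℤ → ℤ → ℤ) : Set (ℤ × ℤ) := {s | t s.1 s.2 = 1}

namespace IsSL2Tiling

variable {t : ℤ → ℤ → ℤ}

lemma pos (ht : IsSL2Tiling t) (i j : ℤ) : 0 < t i j := ht.1 i j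

theorem one_le_minor (ht : IsSL2Tiling t) {r r' c c' : ℤ} (hr : r < r') (hc : c < c') :
    1 ≤ t r c * t r' c' - t r c' * t r' c := by
  have adjacent (d : ℤ) : 1 ≤ cross (t r d, t r' d) (t r (d + 1), t r' (d + 1)) := by
    have := one_le_cross_of_chain (V := fun s => (t s d, t s (d + 1))) (fun s => ht.pos s d)
      (fun s => (ht.2 s d).ge) hr
    simp only [cross] at this ⊢
    linarith
  have := one_le_cross_of_chain (V := fun d => (t r d, t r' d)) (fun d => ht.pos r d) adjacent hc
  simp only [cross] at this
  linarith

theorem exists_row_recurrence (ht : IsSL2Tiling t) (r : ℤ) :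
    ∃ β : ℤ, ∀ c, t (r - 1) c + t (r + 1) c = β * t r c := by
  set β : ℤ → ℤ := fun c => t (r - 1) c * t (r + 1) (c + 1) - t (r - 1) (c + 1) * t (r + 1) c
  have hup := ht.2 (r - 1)
  have hdown := ht.2 r
  simp only [sub_add_cancel] at hup
  have left (c : ℤ) : t (r - 1) c + t (r + 1) c = β c * t r c := by
    linear_combination -t (r - 1) c * hdown c - t (r + 1) c * hup c
  have right (c : ℤ) : t (r - 1) (c + 1) + t (r + 1) (c + 1) = β c * t r (c + 1) := by
    linear_combination -t (r + 1) (c + 1) * hup c - t (r - 1) (c + 1) * hdown c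
  have hperiodic : Function.Periodic β 1 := fun c =>
    mul_right_cancel₀ (ht.pos r (c + 1)).ne' ((left (c + 1)).symm.trans (right c))
  exact ⟨β 0, fun c => by rw [left c, ← hperiodic.int_mul_eq c, mul_one, Int.cast_id]⟩

theorem exists_row_combination (ht : IsSL2Tiling t) (s : ℤ) :
    ∃ γ δ : ℤ, ∀ c, t s c = γ * t 0 c + δ * t 1 c := by
  let P (s : ℤ) : Prop := ∃ γ δ : ℤ, ∀ c, t s c = γ * t 0 c + δ * t 1 c
  suffices h : ∀ s, P s ∧ P (s + 1) from (h s).1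
  intro s
  induction s using Int.induction_on with
  | zero => exact ⟨⟨1, 0, fun c => by ring⟩, ⟨0, 1, fun c => by simp⟩⟩
  | succ k ih =>
    obtain ⟨⟨γ, δ, h₀⟩, γ', δ', h₁⟩ := ih
    obtain ⟨β, hβ⟩ := ht.exists_row_recurrence (k + 1)
    refine ⟨⟨γ', δ', h₁⟩, β * γ' - γ, β * δ' - δ, fun c => ?_⟩
    have := hβ c
    simp only [add_sub_cancel_right] at this
    linear_combination this - h₀ c + β * h₁ c
  | pred k ih =>
    obtain ⟨⟨γ, δ, h₀⟩, γ', δ', h₁⟩ := ih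
    obtain ⟨β, hβ⟩ := ht.exists_row_recurrence (-k)
    refine ⟨⟨β * γ - γ', β * δ - δ', fun c => ?_⟩, by simpa using ⟨γ, δ, h₀⟩⟩
    linear_combination hβ c - h₁ c + β * h₀ c

theorem exists_cross_factorization (ht : IsSL2Tiling t) :
    ∃ u w : ℤ → ℤ × ℤ, (∀ s c, t s c = cross (u s) (w c)) ∧
      (∀ s, cross (u s) (u (s + 1)) = 1) ∧ ∀ c, cross (w c) (w (c + 1)) = 1 := by
  set u : ℤ → ℤ × ℤ := fun s => (t s 0, t s 1)
  set w : ℤ → ℤ × ℤ := fun c => (t 0 c * t 1 0 - t 1 c * t 0 0, t 0 c * t 1 1 - t 1 c * t 0 1)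
  have hu (s : ℤ) : cross (u s) (u (s + 1)) = 1 := by simpa [cross] using ht.2 s 0
  have hu₀ : cross (u 0) (u 1) = 1 := by simpa using hu 0
  have htuw (s c : ℤ) : t s c = cross (u s) (w c) := by
    obtain ⟨γ, δ, h⟩ := ht.exists_row_combination s
    simp only [cross, u, w, h 0, h 1] at hu₀ ⊢
    linear_combination h c - (γ * t 0 c + δ * t 1 c) * hu₀
  refine ⟨u, w, htuw, hu, fun c => ?_⟩
  have h₀₁ : t 0 c * t 1 (c + 1) - t 0 (c + 1) * t 1 c = 1 := by simpa using ht.2 0 c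
  have := cross_mul_cross_sub_cross_mul_cross (u 0) (u 1) (w c) (w (c + 1))
  rw [← htuw, ← htuw, ← htuw, ← htuw, hu₀, h₀₁] at this
  linarith

theorem exists_one_strictly_between (ht : IsSL2Tiling t) {i j p q : ℤ} (hpi : p < i)
    (hjq : j < q) (hP : t i j = 1) (hQ : t p q = 1) :
    ∃ r c, t r c = 1 ∧ j - i < c - r ∧ c - r < q - p := by
  obtain ⟨u, w, htuw, hu, hw⟩ := ht.exists_cross_factorization
  have hu_pos {r r' : ℤ} (h : r < r') : 0 < cross (u r) (u r') := by
    have := cross_mul_cross_sub_cross_mul_cross (u r) (u r') (w 0) (w 1)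
    rw [← htuw, ← htuw, ← htuw, ← htuw, (by simpa using hw 0 : cross (w 0) (w 1) = 1)] at this
    linarith [ht.one_le_minor h zero_lt_one]
  have hw_pos {c c' : ℤ} (h : c < c') : 0 < cross (w c) (w c') := by
    have := cross_mul_cross_sub_cross_mul_cross (u p) (u (p + 1)) (w c) (w c')
    rw [← htuw, ← htuw, ← htuw, ← htuw, hu] at this
    linarith [ht.one_le_minor (lt_add_one p) h]
  rcases exists_cross_eq_one_of_two_chains hpi hjq hu hw (by rw [← htuw, hP])
      (by rw [← htuw, hQ]) (fun s hps _ => ⟨by rw [← htuw]; exact ht.pos _ _, hu_pos hps⟩)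
      (fun c _ hcq => ⟨hw_pos hcq, by rw [← htuw]; exact ht.pos _ _⟩)
    with ⟨s, hps, hsi, h⟩ | ⟨c, hjc, hcq, h⟩
  · exact ⟨s, q, by rwa [htuw], by omega, by omega⟩
  · exact ⟨p, c, by rwa [htuw], by omega, by omega⟩

lemma not_lt_and_lt_of_eq_one (ht : IsSL2Tiling t) {a b c d : ℤ} (h : t a b = 1)
    (h' : t c d = 1) : ¬(a < c ∧ b < d) := fun ⟨hac, hbd⟩ => by
  have := ht.one_le_minor hac hbd
  rw [h, h'] at this
  nlinarith [ht.pos a d, ht.pos c b]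

lemma le_and_le_of_mem_ones (ht : IsSL2Tiling t) {s u : ℤ × ℤ} (hs : s ∈ ones t)
    (hu : u ∈ ones t) (h : s.2 - s.1 ≤ u.2 - u.1) : u.1 ≤ s.1 ∧ s.2 ≤ u.2 := by
  have := ht.not_lt_and_lt_of_eq_one hs hu
  have := ht.not_lt_and_lt_of_eq_one hu hs
  omega

lemma injOn_snd_sub_fst_ones (ht : IsSL2Tiling t) : InjOn (fun s : ℤ × ℤ => s.2 - s.1) (ones t) :=
  fun s hs u hu h => by
    have := ht.le_and_le_of_mem_ones hs hu h.le
    have := ht.le_and_le_of_mem_ones hu hs h.ge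
    exact Prod.ext (by omega) (by omega)

lemma finite_ones_row (ht : IsSL2Tiling t) (i : ℤ) : {s ∈ ones t | s.1 = i}.Finite := by
  have hrow : {c | t i c = 1}.Finite :=
    finite_of_strictMonoOn_of_strictAntiOn (f := t (i + 1)) (g := t (i - 1))
      (fun c (hc : t i c = 1) c' (hc' : t i c' = 1) h => by
        have := ht.one_le_minor (lt_add_one i) h
        rw [hc, hc'] at this
        linarith)
      (fun c (hc : t i c = 1) c' (hc' : t i c' = 1) h => by
        have := ht.one_le_minor (sub_one_lt i) h
        rw [hc, hc'] at this
        linarith)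
      (fun c _ => ht.pos _ _) (fun c _ => ht.pos _ _)
  refine (hrow.image (Prod.mk i)).subset ?_
  rintro ⟨r, c⟩ ⟨hs, rfl : r = i⟩
  exact ⟨c, hs, rfl⟩

lemma finite_ones_col (ht : IsSL2Tiling t) (j : ℤ) : {s ∈ ones t | s.2 = j}.Finite := by
  have hcol : {r | t r j = 1}.Finite :=
    finite_of_strictMonoOn_of_strictAntiOn (f := (t · (j + 1))) (g := (t · (j - 1)))
      (fun r (hr : t r j = 1) r' (hr' : t r' j = 1) h => by
        have := ht.one_le_minor h (lt_add_one j)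
        rw [hr, hr'] at this
        dsimp only
        linarith)
      (fun r (hr : t r j = 1) r' (hr' : t r' j = 1) h => by
        have := ht.one_le_minor h (sub_one_lt j)
        rw [hr, hr'] at this
        dsimp only
        linarith)
      (fun r _ => ht.pos _ _) (fun r _ => ht.pos _ _)
  refine (hcol.image (Prod.mk · j)).subset ?_
  rintro ⟨r, c⟩ ⟨hs, rfl : c = j⟩
  exact ⟨r, hs, rfl⟩

variable {K : Set ℤ} {e : ℤ → ℤ × ℤ}

lemma step_cases (ht : IsSL2Tiling t) (he : BijOn e K (ones t))
    (hmono : StrictMonoOn (fun k => (e k).2 - (e k).1) K) {k : ℤ} (hk : k ∈ K)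
    (hk₁ : k + 1 ∈ K) :
    (e (k + 1)).1 < (e k).1 ∧ (e (k + 1)).2 = (e k).2 ∨
      (e (k + 1)).1 = (e k).1 ∧ (e k).2 < (e (k + 1)).2 := by
  have hlt : (e k).2 - (e k).1 < (e (k + 1)).2 - (e (k + 1)).1 := hmono hk hk₁ (lt_add_one k)
  have hle := ht.le_and_le_of_mem_ones (he.mapsTo hk) (he.mapsTo hk₁) hlt.le
  by_contra! hdiag
  -- a third one between two consecutive ones would have an index strictly between `k` and `k + 1`
  obtain ⟨r, c, hrc, h₁, h₂⟩ := ht.exists_one_strictly_between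
    (by omega : (e (k + 1)).1 < (e k).1) (by omega : (e k).2 < (e (k + 1)).2)
    (he.mapsTo hk) (he.mapsTo hk₁)
  obtain ⟨m, hm, hem⟩ := he.surjOn (show (r, c) ∈ ones t from hrc)
  have := (hmono.lt_iff_lt hk hm).1 (by simp only [hem]; omega)
  have := (hmono.lt_iff_lt hm hk₁).1 (by simp only [hem]; omega)
  omega

lemma exists_steps_above (ht : IsSL2Tiling t) (hK : K.OrdConnected) (he : BijOn e K (ones t))
    (hmono : StrictMonoOn (fun k => (e k).2 - (e k).1) K) (hbdd : ¬BddAbove K) {k₀ : ℤ}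
    (hk₀ : k₀ ∈ K) :
    (∃ k, k₀ ≤ k ∧ k ∈ K ∧ k + 1 ∈ K ∧ (e (k + 1)).1 < (e k).1 ∧ (e (k + 1)).2 = (e k).2) ∧
    (∃ k, k₀ ≤ k ∧ k ∈ K ∧ k + 1 ∈ K ∧ (e (k + 1)).1 = (e k).1 ∧ (e (k + 1)).2 > (e k).2) := by
  have hIci : Ici k₀ ⊆ K := fun k hk => by
    obtain ⟨m, hm, hkm⟩ := not_bddAbove_iff.1 hbdd k
    exact hK.out hk₀ hm ⟨hk, hkm.le⟩
  have hstep (k : ℤ) (hk : k₀ ≤ k) := ht.step_cases he hmono (hIci hk) (hIci (show k₀ ≤ k + 1 by omega))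
  obtain ⟨k, hk, hne⟩ := exists_ne_of_injOn_Ici (he.mapsTo.mono_left hIci)
    (he.injOn.mono hIci) ht.finite_ones_row
  obtain ⟨k', hk', hne'⟩ := exists_ne_of_injOn_Ici (he.mapsTo.mono_left hIci)
    (he.injOn.mono hIci) ht.finite_ones_col
  exact ⟨⟨k, hk, hIci hk, hIci (show k₀ ≤ _ + 1 by omega), by have := hstep k hk; omega⟩,
    ⟨k', hk', hIci hk', hIci (show k₀ ≤ _ + 1 by omega), by have := hstep k' hk'; omega⟩⟩

lemma exists_steps_below (ht : IsSL2Tiling t) (hK : K.OrdConnected) (he : BijOn e K (ones t))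
    (hmono : StrictMonoOn (fun k => (e k).2 - (e k).1) K) (hbdd : ¬BddBelow K) {k₀ : ℤ}
    (hk₀ : k₀ ∈ K) :
    (∃ k, k ≤ k₀ ∧ k ∈ K ∧ k + 1 ∈ K ∧ (e (k + 1)).1 < (e k).1 ∧ (e (k + 1)).2 = (e k).2) ∧
    (∃ k, k ≤ k₀ ∧ k ∈ K ∧ k + 1 ∈ K ∧ (e (k + 1)).1 = (e k).1 ∧ (e (k + 1)).2 > (e k).2) := by
  have hIic : Iic k₀ ⊆ K := fun k hk => by
    obtain ⟨m, hm, hmk⟩ := not_bddBelow_iff.1 hbdd k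
    exact hK.out hm hk₀ ⟨hmk.le, hk⟩
  have hstep (k : ℤ) (hk : k < k₀) := ht.step_cases he hmono (hIic hk.le) (hIic (show k + 1 ≤ k₀ by omega))
  obtain ⟨k, hk, hne⟩ := exists_ne_of_injOn_Iic (he.mapsTo.mono_left hIic)
    (he.injOn.mono hIic) ht.finite_ones_row
  obtain ⟨k', hk', hne'⟩ := exists_ne_of_injOn_Iic (he.mapsTo.mono_left hIic)
    (he.injOn.mono hIic) ht.finite_ones_col
  exact ⟨⟨k, hk.le, hIic hk.le, hIic (show _ + 1 ≤ k₀ by omega), by have := hstep k hk; omega⟩,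
    ⟨k', hk'.le, hIic hk'.le, hIic (show _ + 1 ≤ k₀ by omega), by have := hstep k' hk'; omega⟩⟩

end IsSL2Tiling

theorem ones_on_zigzag (t : ℤ → ℤ → ℤ) (ht : IsSL2Tiling t)
    (hone : ∃ i j : ℤ, t i j = 1) :
    ∃ (K : Set ℤ) (b v : ℤ → ℤ),
      K.Nonempty ∧ K.OrdConnected ∧
      -- (i) the entries equal to 1 are exactly those indexed by K
      (∀ i j : ℤ, t i j = 1 ↔ ∃ k ∈ K, i = b k ∧ j = v k) ∧
      -- (ii) at each step, exactly one of option (a) or option (b) holds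
      (∀ k, k ∈ K → k + 1 ∈ K →
        Xor' (b (k+1) < b k ∧ v (k+1) = v k)
             (b (k+1) = b k ∧ v (k+1) > v k)) ∧
      -- (iii) if K is unbounded above, both options occur arbitrarily far right
      (¬ BddAbove K → ∀ k₀ ∈ K,
        (∃ k, k₀ ≤ k ∧ k ∈ K ∧ k + 1 ∈ K ∧ b (k+1) < b k ∧ v (k+1) = v k) ∧
        (∃ k', k₀ ≤ k' ∧ k' ∈ K ∧ k' + 1 ∈ K ∧ b (k'+1) = b k' ∧ v (k'+1) > v k')) ∧
      -- (iv) if K is unbounded below, both options occur arbitrarily far left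
      (¬ BddBelow K → ∀ k₀ ∈ K,
        (∃ k, k ≤ k₀ ∧ k ∈ K ∧ k + 1 ∈ K ∧ b (k+1) < b k ∧ v (k+1) = v k) ∧
        (∃ k', k' ≤ k₀ ∧ k' ∈ K ∧ k' + 1 ∈ K ∧ b (k'+1) = b k' ∧ v (k'+1) > v k')) := by
  obtain ⟨K, e, hK, he, hmono⟩ := exists_ordConnected_enumeration (ones t) _ ht.injOn_snd_sub_fst_ones
  obtain ⟨i₀, j₀, h₀⟩ := hone
  refine ⟨K, fun k => (e k).1, fun k => (e k).2, ?_, hK, fun i j => ⟨fun h => ?_, ?_⟩,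
    fun k hk hk₁ => ?_, fun hbdd k₀ hk₀ => ht.exists_steps_above hK he hmono hbdd hk₀,
    fun hbdd k₀ hk₀ => ht.exists_steps_below hK he hmono hbdd hk₀⟩
  · obtain ⟨k, hk, -⟩ := he.surjOn (show (i₀, j₀) ∈ ones t from h₀)
    exact ⟨k, hk⟩
  · obtain ⟨k, hk, hek⟩ := he.surjOn (show (i, j) ∈ ones t from h)
    exact ⟨k, hk, by simp [hek]⟩
  · rintro ⟨k, hk, rfl, rfl⟩
    exact he.mapsTo hk
  · have := ht.step_cases he hmono hk hk₁
    beta_reduce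
    unfold Xor' Xor
    omega
end

section
/- Let s and t be SL₂-tilings. If there exist integers f and g such that s(f,j) = t(f,j) for all integers j and s(i,g) = t(i,g) for all integers i, then s(i,j) = t(i,j) for all integers i, j. (An SL₂-tiling is determined entirely by its values on one full row and one full column.) -/
theorem tiling_determined_by_row_and_column
    (s t : ℤ → ℤ → ℤ) (hs : IsSL2Tiling s) (ht : IsSL2Tiling t)
    (f g : ℤ) (hrow : ∀ j, s f j = t f j) (hcol : ∀ i, s i g = t i g) :
    ∀ i j, s i j = t i j := by
  have key : ∀ n : ℕ, ∀ i j : ℤ, (i - f).natAbs + (j - g).natAbs = n → s i j = t i j := by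
    intro n
    induction n using Nat.strong_induction_on with
    | _ n ih =>
      intro i j hn
      rcases eq_or_ne i f with hi | hi
      · subst hi; exact hrow j
      rcases eq_or_ne j g with hj | hj
      · subst hj; exact hcol i
      rcases lt_or_gt_of_ne hi with hif | hif <;> rcases lt_or_gt_of_ne hj with hjg | hjg
      · -- i < f, j < g : use minor at (i, j)
        have e1 := hs.2 i j
        have e2 := ht.2 i j
        have a1 : s i (j+1) = t i (j+1) :=
          ih ((i - f).natAbs + ((j+1) - g).natAbs) (by omega) _ _ rfl
        have a2 : s (i+1) j = t (i+1) j :=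
          ih (((i+1) - f).natAbs + (j - g).natAbs) (by omega) _ _ rfl
        have a3 : s (i+1) (j+1) = t (i+1) (j+1) :=
          ih (((i+1) - f).natAbs + ((j+1) - g).natAbs) (by omega) _ _ rfl
        rw [a1, a2, a3] at e1
        have hne : t (i+1) (j+1) ≠ 0 := by have := ht.1 (i+1) (j+1); omega
        have h : t (i+1) (j+1) * s i j = t (i+1) (j+1) * t i j := by linarith
        exact mul_left_cancel₀ hne h
      · -- i < f, j > g : use minor at (i, j-1)
        have e1 := hs.2 i (j-1)
        have e2 := ht.2 i (j-1)
        rw [show j - 1 + 1 = j by ring] at e1 e2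
        have a1 : s i (j-1) = t i (j-1) :=
          ih ((i - f).natAbs + ((j-1) - g).natAbs) (by omega) _ _ rfl
        have a2 : s (i+1) j = t (i+1) j :=
          ih (((i+1) - f).natAbs + (j - g).natAbs) (by omega) _ _ rfl
        have a3 : s (i+1) (j-1) = t (i+1) (j-1) :=
          ih (((i+1) - f).natAbs + ((j-1) - g).natAbs) (by omega) _ _ rfl
        rw [a1, a2, a3] at e1
        have hne : t (i+1) (j-1) ≠ 0 := by have := ht.1 (i+1) (j-1); omega
        have h : t (i+1) (j-1) * s i j = t (i+1) (j-1) * t i j := by linarith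
        exact mul_left_cancel₀ hne h
      · -- i > f, j < g : use minor at (i-1, j)
        have e1 := hs.2 (i-1) j
        have e2 := ht.2 (i-1) j
        rw [show i - 1 + 1 = i by ring] at e1 e2
        have a1 : s (i-1) j = t (i-1) j :=
          ih (((i-1) - f).natAbs + (j - g).natAbs) (by omega) _ _ rfl
        have a2 : s (i-1) (j+1) = t (i-1) (j+1) :=
          ih (((i-1) - f).natAbs + ((j+1) - g).natAbs) (by omega) _ _ rfl
        have a3 : s i (j+1) = t i (j+1) :=
          ih ((i - f).natAbs + ((j+1) - g).natAbs) (by omega) _ _ rfl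
        rw [a1, a2, a3] at e1
        have hne : t (i-1) (j+1) ≠ 0 := by have := ht.1 (i-1) (j+1); omega
        have h : t (i-1) (j+1) * s i j = t (i-1) (j+1) * t i j := by linarith
        exact mul_left_cancel₀ hne h
      · -- i > f, j > g : use minor at (i-1, j-1)
        have e1 := hs.2 (i-1) (j-1)
        have e2 := ht.2 (i-1) (j-1)
        rw [show i - 1 + 1 = i by ring, show j - 1 + 1 = j by ring] at e1 e2
        have a1 : s (i-1) (j-1) = t (i-1) (j-1) :=
          ih (((i-1) - f).natAbs + ((j-1) - g).natAbs) (by omega) _ _ rfl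
        have a2 : s (i-1) j = t (i-1) j :=
          ih (((i-1) - f).natAbs + (j - g).natAbs) (by omega) _ _ rfl
        have a3 : s i (j-1) = t i (j-1) :=
          ih ((i - f).natAbs + ((j-1) - g).natAbs) (by omega) _ _ rfl
        rw [a1, a2, a3] at e1
        have hne : t (i-1) (j-1) ≠ 0 := by have := ht.1 (i-1) (j-1); omega
        have h : t (i-1) (j-1) * s i j = t (i-1) (j-1) * t i j := by linarith
        exact mul_left_cancel₀ hne h
  intro i j
  exact key _ i j rfl
end

section
/- Let t be an SL₂-tiling. (i) If integers b, v satisfy t(b,v−1) < t(b,v) and t(b,v) > t(b,v+1) (a local maximum in the b-th row), then t(c,v) = t(c,v−1) + t(c,v+1) for every integer c, and the function t' defined by t'(i,j) = t(i,j) for j < v and t'(i,j) = t(i,j+1) for j ≥ v (deleting the v-th column) is again an SL₂-tiling. (ii) Symmetrically, if t(b−1,v) < t(b,v) and t(b,v) > t(b+1,v) (a local maximum in the v-th column), then t(b,w) = t(b−1,w) + t(b+1,w) for every integer w, and the function t'' defined by t''(i,j) = t(i,j) for i < b and t''(i,j) = t(i+1,j) for i ≥ b (deleting the b-th row) is again an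 SL₂-tiling. -/
def skipMinor (t : ℤ → ℤ → ℤ) (v i : ℤ) : ℤ :=
  t i (v-1) * t (i+1) (v+1) - t i (v+1) * t (i+1) (v-1)

def deleteColumn (t : ℤ → ℤ → ℤ) (v : ℤ) : ℤ → ℤ → ℤ :=
  fun i j => if j < v then t i j else t i (j+1)

namespace IsSL2Tiling

variable {t : ℤ → ℤ → ℤ}

theorem skipMinor_mul (ht : IsSL2Tiling t) (v i : ℤ) :
    skipMinor t v i * t i v = t i (v-1) + t i (v+1) := by
  have h := ht.2 i (v-1)
  rw [sub_add_cancel] at h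
  unfold skipMinor
  linear_combination t i (v-1) * ht.2 i v + t i (v+1) * h

theorem skipMinor_mul_succ (ht : IsSL2Tiling t) (v i : ℤ) :
    skipMinor t v i * t (i+1) v = t (i+1) (v-1) + t (i+1) (v+1) := by
  have h := ht.2 i (v-1)
  rw [sub_add_cancel] at h
  unfold skipMinor
  linear_combination t (i+1) (v+1) * h + t (i+1) (v-1) * ht.2 i v

theorem skipMinor_succ (ht : IsSL2Tiling t) (v i : ℤ) :
    skipMinor t v (i+1) = skipMinor t v i := by
  have hpos : t (i+1) v ≠ 0 := by linarith [ht.1 (i+1) v]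
  refine mul_right_cancel₀ hpos ?_
  rw [ht.skipMinor_mul, ht.skipMinor_mul_succ]

theorem skipMinor_eq (ht : IsSL2Tiling t) (v b c : ℤ) : skipMinor t v c = skipMinor t v b := by
  have hper : Function.Periodic (skipMinor t v) 1 := ht.skipMinor_succ v
  simpa using hper.int_mul (c - b) b

theorem skipMinor_eq_one_of_lt (ht : IsSL2Tiling t) {b v : ℤ}
    (hl : t b (v-1) < t b v) (hr : t b (v+1) < t b v) : skipMinor t v b = 1 := by
  have h := ht.skipMinor_mul v b
  have := ht.1 b (v-1)
  have := ht.1 b (v+1)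
  have hlo : 0 < skipMinor t v b := by nlinarith
  have hhi : skipMinor t v b < 2 := by nlinarith
  omega

theorem deleteColumn_of_skipMinor_eq_one (ht : IsSL2Tiling t) {v : ℤ}
    (h : ∀ i, skipMinor t v i = 1) :
    IsSL2Tiling (deleteColumn t v) := by
  refine ⟨fun i j => by unfold deleteColumn; split <;> apply ht.1, fun i j => ?_⟩
  unfold deleteColumn
  rcases lt_trichotomy (j+1) v with hj | hj | hj
  · simp only [hj, show j < v by omega, if_true]
    exact ht.2 i j
  · simp only [show j < v by omega, show ¬ j + 1 < v by omega, if_true, if_false]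
    obtain rfl : j = v - 1 := by omega
    rw [show v - 1 + 1 + 1 = v + 1 by ring]
    exact h i
  · simp only [show ¬ j < v by omega, show ¬ j + 1 < v by omega, if_false]
    exact ht.2 i (j+1)

theorem deleteColumn_of_lt (ht : IsSL2Tiling t) {b v : ℤ}
    (hl : t b (v-1) < t b v) (hr : t b (v+1) < t b v) :
    (∀ c : ℤ, t c v = t c (v-1) + t c (v+1)) ∧ IsSL2Tiling (deleteColumn t v) := by
  have hone : ∀ c, skipMinor t v c = 1 := fun c =>
    (ht.skipMinor_eq v b c).trans (ht.skipMinor_eq_one_of_lt hl hr)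
  refine ⟨fun c => ?_, ht.deleteColumn_of_skipMinor_eq_one hone⟩
  simpa [hone c] using ht.skipMinor_mul v c

end IsSL2Tiling

theorem delete_row_or_column (t : ℤ → ℤ → ℤ) (ht : IsSL2Tiling t) :
    -- (i) local maximum in a row: delete the v-th column
    (∀ b v : ℤ, t b (v-1) < t b v → t b (v+1) < t b v →
      (∀ c : ℤ, t c v = t c (v-1) + t c (v+1)) ∧
      IsSL2Tiling (fun i j => if j < v then t i j else t i (j+1))) ∧
    -- (ii) local maximum in a column: delete the b-th row
    (∀ b v : ℤ, t (b-1) v < t b v → t (b+1) v < t b v →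
      (∀ w : ℤ, t b w = t (b-1) w + t (b+1) w) ∧
      IsSL2Tiling (fun i j => if i < b then t i j else t (i+1) j)) := by
  refine ⟨fun b v hl hr => ht.deleteColumn_of_lt hl hr, fun b v hl hr => ?_⟩
  obtain ⟨hsum, hdel⟩ := ht.transpose.deleteColumn_of_lt (b := v) (v := b) hl hr
  exact ⟨hsum, hdel.transpose⟩
end

section
/- Let t be an SL₂-tiling with no entry equal to 1, i.e. t(i,j) ≥ 2 for all i, j, and let m be the minimal value attained by t. Then there are no integers b < c and v < w with t(b,v) = m and t(c,w) = m. -/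
theorem sl2_col_minor (t : ℤ → ℤ → ℤ) (ht : IsSL2Tiling t)
    (h2 : ∀ i j : ℤ, 2 ≤ t i j) (i j : ℤ) :
    ∀ j' : ℤ, j + 1 ≤ j' → 1 ≤ t i j * t (i+1) j' - t i j' * t (i+1) j := by
  refine Int.le_induction ?_ ?_
  · exact le_of_eq (ht.2 i j).symm
  · intro n hn ih
    have hd := ht.2 i n
    have key : (t i j * t (i+1) (n+1) - t i (n+1) * t (i+1) j) * t i n =
        t i j * (t i n * t (i+1) (n+1) - t i (n+1) * t (i+1) n) +
        (t i j * t (i+1) n - t i n * t (i+1) j) * t i (n+1) := by ring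
    nlinarith [h2 i j, h2 i n, h2 i (n+1), h2 (i+1) j, h2 (i+1) n]

theorem sl2_minor (t : ℤ → ℤ → ℤ) (ht : IsSL2Tiling t)
    (h2 : ∀ i j : ℤ, 2 ≤ t i j) (i j j' : ℤ) (hj : j + 1 ≤ j') :
    ∀ i' : ℤ, i + 1 ≤ i' → 1 ≤ t i j * t i' j' - t i j' * t i' j := by
  refine Int.le_induction ?_ ?_
  · exact sl2_col_minor t ht h2 i j j' hj
  · intro n hn ih
    have hd := sl2_col_minor t ht h2 n j j' hj
    have key : (t i j * t (n+1) j' - t i j' * t (n+1) j) * t n j =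
        t i j * (t n j * t (n+1) j' - t n j' * t (n+1) j) +
        (t i j * t n j' - t i j' * t n j) * t (n+1) j := by ring
    nlinarith [h2 i j, h2 n j, h2 (n+1) j, h2 i j', h2 n j']

theorem minimum_no_southeast_pair (t : ℤ → ℤ → ℤ) (ht : IsSL2Tiling t)
    (h2 : ∀ i j : ℤ, 2 ≤ t i j)
    (m : ℤ) (hmin : ∀ i j : ℤ, m ≤ t i j) (hatt : ∃ i j : ℤ, t i j = m) :
    ¬ ∃ b c v w : ℤ, b < c ∧ v < w ∧ t b v = m ∧ t c w = m := by
  rintro ⟨b, c, v, w, hbc, hvw, hbv, hcw⟩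
  obtain ⟨i0, j0, hij0⟩ := hatt
  have hm2 : 2 ≤ m := hij0 ▸ h2 i0 j0
  have hD := sl2_minor t ht h2 b v w hvw c hbc
  have ha := hmin b w
  have hb := hmin c v
  nlinarith [hD, ha, hb, hm2, hbv, hcw]
end

section
/- Let r and m be coprime integers with 0 < r < m. Then there exist nonnegative integers i, j, k, ℓ with i·ℓ − j·k = 1 (so that the matrix (i j; k ℓ) lies in SL₂(ℤ) and has nonnegative entries) such that r = i + j and m = i + j + k + ℓ. -/
theorem coprime_matrix_exists (r m : ℤ) (hcop : IsCoprime r m)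
    (hr : 0 < r) (hrm : r < m) :
    ∃ i j k l : ℤ, 0 ≤ i ∧ 0 ≤ j ∧ 0 ≤ k ∧ 0 ≤ l ∧
      i * l - j * k = 1 ∧ r = i + j ∧ m = i + j + k + l := by
  obtain ⟨a, b, hab⟩ := hcop
  set s : ℤ := m - r with hs_def
  have hs : 0 < s := by omega
  have hbs : (a + b) * r + b * s = 1 := by rw [hs_def]; ring_nf; linarith [hab]
  set i : ℤ := (b - 1) % r + 1 with hi_def
  have hmod1 : 0 ≤ (b - 1) % r := Int.emod_nonneg _ (by omega)
  have hmod2 : (b - 1) % r < r := Int.emod_lt_of_pos _ hr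
  have hi1 : 1 ≤ i := by omega
  have hi2 : i ≤ r := by omega
  have hdvd_ib : r ∣ i - b := by
    have := Int.emod_add_mul_ediv (b - 1) r
    exact ⟨-((b - 1) / r), by rw [mul_neg]; omega⟩
  have hdvd : r ∣ i * s - 1 := by
    have h1 : i * s - 1 = (i - b) * s + (-(a + b)) * r := by linarith [hbs]
    rw [h1]
    exact dvd_add (Dvd.dvd.mul_right hdvd_ib s) (Dvd.intro_left _ rfl)
  set k : ℤ := (i * s - 1) / r with hk_def
  have hrk : r * k = i * s - 1 := by rw [hk_def, Int.mul_ediv_cancel' hdvd]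
  have hk0 : 0 ≤ k := by nlinarith
  have hl0 : 0 ≤ s - k := by nlinarith
  refine ⟨i, r - i, k, s - k, by omega, by omega, hk0, hl0, ?_, by ring, by omega⟩
  nlinarith
end
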